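/- arXiv:2205.14835 — 3 statements merged into one kernel-verified Lean document; each statement's English description precedes it below -/
import Mathlib

section
/- Let w ∈ W, s, s' ∈ S, and b ∈ {0,1}. If s'w = ws then φ_{s,b}(s'w) = φ_{s,b}(w); otherwise φ_{s,b}(s'w) = s'·φ_{s,b}(w). Moreover, if w ≤_L s'w (equivalently ℓ(s'w) > ℓ(w)) then φ_{s,b}(w) ≤_L φ_{s,b}(s'w); consequently the map φ_{s,b} : W → W is order-preserving for the left weak order. -/
open Polynomial

namespace Paper

variable {B W : Type*} [Group W] {M : CoxeterMatrix B} (cs : CoxeterSystem M W)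

/-- The standard parabolic subgroup `W_J` generated by the simple reflections in `J`. -/
def WJ (J : Set B) : Subgroup W :=
  Subgroup.closure (cs.simple '' J)

/-- `w` is a minimal-length representative of its right coset `W_J w`, i.e. `w ∈ ᴶW`. -/
def IsMinRep (J : Set B) (w : W) : Prop :=
  ∀ u ∈ WJ cs J, cs.length w ≤ cs.length (u * w)

open scoped Classical in
/-- `w ·_J s`: equals `w * s` if `w * s ∈ ᴶW`, and `w` otherwise. -/
noncomputable def mulJ (J : Set B) (w : W) (i : B) : W :=
  if IsMinRep cs J (w * cs.simple i) then w * cs.simple i else w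

/-- `φ_{J,s,b}` : for `b = 1` the Bruhat-maximum of `{w ·_J s, w}` (equivalently, the longer
of the two), for `b = 0` the Bruhat-minimum (the shorter of the two). -/
noncomputable def phiJ (J : Set B) (i : B) (b : Bool) (w : W) : W :=
  if b then (if cs.length w ≤ cs.length (mulJ cs J w i) then mulJ cs J w i else w)
  else (if cs.length (mulJ cs J w i) ≤ cs.length w then mulJ cs J w i else w)

/-- `φ_{J,σ|_k,b|_k}(w)`: the composition `φ_{J,s_k,b_k} ∘ ⋯ ∘ φ_{J,s_1,b_1}` over the
length-`k` prefix of the word, applied to `w`. -/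
noncomputable def phiJUpTo (J : Set B) {n : ℕ} (σ : Fin n → B) (b : Fin n → Bool)
    (k : ℕ) (w : W) : W :=
  ((List.ofFn fun i : Fin n => ((σ i : B), (b i : Bool))).take k).foldl
    (fun v p => phiJ cs J p.1 p.2 v) w

/-- `φ_{J,σ,b} = φ_{J,s_n,b_n} ∘ ⋯ ∘ φ_{J,s_1,b_1}`. -/
noncomputable def phiJSeq (J : Set B) {n : ℕ} (σ : Fin n → B) (b : Fin n → Bool) (w : W) : W :=
  phiJUpTo cs J σ b n w

/-- `φ_{s,b}(w)`: `max(ws, w)` for `b = 1`, `min(ws, w)` for `b = 0` (in Bruhat order;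
equivalently by length, since `w` and `ws` are Bruhat-comparable). -/
noncomputable def phi (i : B) (b : Bool) (w : W) : W :=
  if b then (if cs.length w ≤ cs.length (w * cs.simple i) then w * cs.simple i else w)
  else (if cs.length (w * cs.simple i) ≤ cs.length w then w * cs.simple i else w)

/-- `φ_{σ|_k,b|_k}(w)` (the case `J = ∅`). -/
noncomputable def phiUpTo {n : ℕ} (σ : Fin n → B) (b : Fin n → Bool) (k : ℕ) (w : W) : W :=
  ((List.ofFn fun i : Fin n => ((σ i : B), (b i : Bool))).take k).foldl
    (fun v p => phi cs p.1 p.2 v) w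

/-- `φ_{σ,b}(w)` (the case `J = ∅`). -/
noncomputable def phiSeq {n : ℕ} (σ : Fin n → B) (b : Fin n → Bool) (w : W) : W :=
  phiUpTo cs σ b n w

/-- `b` is a `(σ,J)`-good word for `w`: `φ_{σ,b}(w) = w`, and for each left descent
`s ∈ D_L(w) ∩ J` there is a position `i` with
`φ_{σ|_{i-1},b|_{i-1}}(w) · s_i = s · φ_{σ|_{i-1},b|_{i-1}}(w)`. -/
def Good (J : Set B) {n : ℕ} (σ : Fin n → B) (w : W) (b : Fin n → Bool) : Prop :=
  phiSeq cs σ b w = w ∧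
  ∀ i0 ∈ J, cs.length (cs.simple i0 * w) < cs.length w →
    ∃ i : Fin n,
      cs.simple i0 * phiUpTo cs σ b (i : ℕ) w = phiUpTo cs σ b (i : ℕ) w * cs.simple (σ i)

/-- `|b| = b_1 + ⋯ + b_n`. -/
def wt {n : ℕ} (b : Fin n → Bool) : ℕ := ∑ i, if b i then 1 else 0

/-- Left weak order: `w' ≤_L w` iff `w = u * w'` with `ℓ(w) = ℓ(u) + ℓ(w')`. -/
def leL (w' w : W) : Prop :=
  ∃ u : W, w = u * w' ∧ cs.length w = cs.length u + cs.length w'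

end Paper

/-!
`φ_{s,b}(w)` is `w` or `ws`, chosen according to whether `s` is a right descent of `w`. The point
is that left multiplication by `s'` does not change whether `s` is a right descent, unless
`s'w = ws`; in that exceptional case `{s'w, s'ws} = {ws, w}` and `φ_{s,b}` takes the same value on
both. Descents are detected by Tits' sign cocycle: `W` acts on `W × {±1}` with `s` sending
`(t, ε)` to `(sts, -ε)` if `t = s` and to `(sts, ε)` otherwise, and the sign acquired by `(s, 1)`
under `w` is `(-1)^{#{occurrences of s in the right inversion sequence of a word for w}}`, which is
`-1` exactly when `ℓ(ws) < ℓ(w)`. Since `≤_L` is generated by the covers `w ⋖ s'w`, monotonicity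
follows from the case of a single cover.
-/

namespace Paper

open CoxeterSystem

section SignPerm

variable {G : Type*} [Group G]

open scoped Classical in
noncomputable def signPerm (g : G) : Equiv.Perm (G × ℤˣ) :=
  Equiv.prodShear (MulAut.conj g).toEquiv
    fun t => if t = g then Equiv.neg ℤˣ else Equiv.refl ℤˣ

open scoped Classical in
theorem signPerm_apply (g : G) (x : G × ℤˣ) :
    signPerm g x = (g * x.1 * g⁻¹, if x.1 = g then -x.2 else x.2) := by
  simp only [signPerm, Equiv.prodShear_apply, MulEquiv.toEquiv_eq_coe, MulEquiv.coe_toEquiv,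
    MulAut.conj_apply]
  split_ifs <;> rfl

theorem mul_mul_inv_eq_iff_eq_inv_mul_mul {g c t : G} : g * t * g⁻¹ = c ↔ t = g⁻¹ * c * g := by
  constructor <;> rintro rfl <;> group

theorem mul_mul_pow_eq_inv_pow_mul {a b : G} (ha : a * a = 1) (hb : b * b = 1) (r : ℕ) :
    b * (a * b) ^ r = ((a * b) ^ r)⁻¹ * b := by
  have ha' : a⁻¹ = a := inv_eq_of_mul_eq_one_right ha
  have hb' : b⁻¹ = b := inv_eq_of_mul_eq_one_right hb
  calc b * (a * b) ^ r = (b * (a * b) * b⁻¹) ^ r * b := by rw [conj_pow]; group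
    _ = (b⁻¹ * a⁻¹) ^ r * b := by simp only [mul_assoc, mul_one, ha', hb', hb]
    _ = ((a * b) ^ r)⁻¹ * b := by rw [← mul_inv_rev, inv_pow]

theorem mul_pow_conj_eq_right_iff {a b : G} (ha : a * a = 1) (hb : b * b = 1) (r : ℕ) {t : G} :
    (a * b) ^ r * t * ((a * b) ^ r)⁻¹ = b ↔ t = ((a * b) ^ (2 * r))⁻¹ * b := by
  rw [mul_mul_inv_eq_iff_eq_inv_mul_mul, mul_assoc, mul_mul_pow_eq_inv_pow_mul ha hb, two_mul,
    pow_add, mul_inv_rev, ← mul_assoc]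

theorem mul_pow_conj_conj_eq_left_iff {a b : G} (ha : a * a = 1) (hb : b * b = 1) (r : ℕ)
    {t : G} : b * ((a * b) ^ r * t * ((a * b) ^ r)⁻¹) * b⁻¹ = a ↔
      t = ((a * b) ^ (2 * r + 1))⁻¹ * b := by
  have hb' : b⁻¹ = b := inv_eq_of_mul_eq_one_right hb
  have key : ((a * b) ^ r)⁻¹ * (b⁻¹ * a * b) * (a * b) ^ r = ((a * b) ^ (2 * r + 1))⁻¹ * b := by
    rw [hb', mul_assoc b a b, mul_assoc _ (b * (a * b)), mul_assoc b, ← pow_succ',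
      mul_mul_pow_eq_inv_pow_mul ha hb, show 2 * r + 1 = (r + 1) + r by omega, pow_add,
      mul_inv_rev, ← mul_assoc]
    group
  rw [mul_mul_inv_eq_iff_eq_inv_mul_mul, mul_mul_inv_eq_iff_eq_inv_mul_mul, key]

open scoped Classical in
theorem signPerm_mul_pow_apply {a b : G} (ha : a * a = 1) (hb : b * b = 1) (k : ℕ)
    (x : G × ℤˣ) :
    ((signPerm a * signPerm b) ^ k) x = ((a * b) ^ k * x.1 * ((a * b) ^ k)⁻¹,
      x.2 * ∏ r ∈ Finset.range (2 * k), if x.1 = ((a * b) ^ r)⁻¹ * b then -1 else 1) := by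
  induction k with
  | zero => simp
  | succ k ih =>
    rw [pow_succ', Equiv.Perm.mul_apply, ih, Equiv.Perm.mul_apply, signPerm_apply,
      signPerm_apply]
    dsimp only
    simp only [mul_pow_conj_eq_right_iff ha hb, mul_pow_conj_conj_eq_left_iff ha hb,
      show 2 * (k + 1) = 2 * k + 1 + 1 by omega, Finset.prod_range_succ, Prod.mk.injEq]
    constructor
    · simp only [pow_succ', mul_inv_rev, mul_assoc]
    · by_cases h₁ : x.1 = ((a * b) ^ (2 * k))⁻¹ * b <;>
        by_cases h₂ : x.1 = ((a * b) ^ (2 * k + 1))⁻¹ * b <;> simp [h₁, h₂]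

theorem signPerm_mul_pow_eq_one {a b : G} (ha : a * a = 1) (hb : b * b = 1) {m : ℕ}
    (hm : (a * b) ^ m = 1) : (signPerm a * signPerm b) ^ m = 1 := by
  classical
  ext1 ⟨t, e⟩
  rw [Equiv.Perm.one_apply, signPerm_mul_pow_apply ha hb, hm, two_mul, Finset.prod_range_add]
  -- the signs flip at the reflections `(ab)^{-r} b`, `r < 2m`, which repeat with period `m`
  have periodic : ∀ r ∈ Finset.range m, (if t = ((a * b) ^ (m + r))⁻¹ * b then (-1 : ℤˣ) else 1)
      = if t = ((a * b) ^ r)⁻¹ * b then -1 else 1 := by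
    intro r _
    rw [pow_add, hm, one_mul]
  simp only [Finset.prod_congr rfl periodic, Int.units_mul_self, one_mul, inv_one, mul_one]

end SignPerm

section CoxeterGroup

variable {B W : Type*} [Group W] {M : CoxeterMatrix B} (cs : CoxeterSystem M W)

noncomputable def titsRep : W →* Equiv.Perm (W × ℤˣ) :=
  cs.lift ⟨fun i => signPerm (cs.simple i), fun i i' =>
    signPerm_mul_pow_eq_one (cs.simple_mul_simple_self i) (cs.simple_mul_simple_self i')
      (cs.simple_mul_simple_pow i i')⟩

theorem titsRep_simple (i : B) : titsRep cs (cs.simple i) = signPerm (cs.simple i) :=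
  cs.lift_apply_simple _ i

open scoped Classical in
theorem titsRep_wordProd_apply (ω : List B) (t : W) (e : ℤˣ) :
    titsRep cs (cs.wordProd ω) (t, e) = (cs.wordProd ω * t * (cs.wordProd ω)⁻¹,
      e * (-1) ^ (cs.rightInvSeq ω).count t) := by
  induction ω generalizing e with
  | nil => simp [CoxeterSystem.rightInvSeq]
  | cons i ω ih =>
    have hris : cs.rightInvSeq (i :: ω)
        = ((cs.wordProd ω)⁻¹ * cs.simple i * cs.wordProd ω) :: cs.rightInvSeq ω := rfl
    rw [wordProd_cons, map_mul, Equiv.Perm.mul_apply, ih, titsRep_simple, signPerm_apply, hris,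
      List.count_cons, Prod.mk.injEq]
    dsimp only
    constructor
    · simp only [mul_inv_rev, cs.inv_simple, mul_assoc]
    · rw [mul_mul_inv_eq_iff_eq_inv_mul_mul]
      by_cases h : t = (cs.wordProd ω)⁻¹ * cs.simple i * cs.wordProd ω
      · simp [h, pow_succ]
      · simp [h, Ne.symm h]

noncomputable def reflSign (w t : W) : ℤˣ := (titsRep cs w (t, 1)).2

theorem titsRep_apply (w t : W) (e : ℤˣ) :
    titsRep cs w (t, e) = (w * t * w⁻¹, e * reflSign cs w t) := by
  obtain ⟨ω, rfl⟩ := cs.wordProd_surjective w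
  simp [reflSign, titsRep_wordProd_apply]

open scoped Classical in
theorem reflSign_wordProd (ω : List B) (t : W) :
    reflSign cs (cs.wordProd ω) t = (-1) ^ (cs.rightInvSeq ω).count t := by
  rw [reflSign, titsRep_wordProd_apply, one_mul]

theorem reflSign_eq_neg_one_iff_mem_rightInvSeq {ω : List B} (hω : cs.IsReduced ω) (t : W) :
    reflSign cs (cs.wordProd ω) t = -1 ↔ t ∈ cs.rightInvSeq ω := by
  classical
  rw [reflSign_wordProd, hω.nodup_rightInvSeq.count]
  split_ifs with h <;> simp [h]

theorem reflSign_simple_eq_neg_one_iff (w : W) (i : B) :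
    reflSign cs w (cs.simple i) = -1 ↔ cs.IsRightDescent w i := by
  constructor
  · intro h
    obtain ⟨ω, hω, rfl⟩ := cs.exists_isReduced w
    exact (cs.isRightInversion_of_mem_rightInvSeq hω
      ((reflSign_eq_neg_one_iff_mem_rightInvSeq cs hω _).mp h)).2
  · intro h
    obtain ⟨ω, hω, hωw⟩ := cs.exists_isReduced (w * cs.simple i)
    have hπ : cs.wordProd (ω.concat i) = w := by
      rw [wordProd_concat, ← hωw, simple_mul_simple_cancel_right]
    have hred : cs.IsReduced (ω.concat i) := by
      rw [CoxeterSystem.IsReduced, hπ, List.length_concat, ← hω.eq, ← hωw]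
      rcases cs.length_mul_simple w i with h' | h' <;> simp only [IsRightDescent] at h <;> omega
    rw [← hπ, reflSign_eq_neg_one_iff_mem_rightInvSeq cs hred, rightInvSeq_concat]
    simp

theorem reflSign_simple_mul (i' : B) (w t : W) (h : w * t * w⁻¹ ≠ cs.simple i') :
    reflSign cs (cs.simple i' * w) t = reflSign cs w t := by
  rw [reflSign, map_mul, Equiv.Perm.mul_apply, titsRep_apply cs w, titsRep_simple, signPerm_apply,
    if_neg h, one_mul]

theorem isRightDescent_simple_mul_iff_of_ne {i i' : B} {w : W}
    (hne : cs.simple i' * w ≠ w * cs.simple i) :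
    cs.IsRightDescent (cs.simple i' * w) i ↔ cs.IsRightDescent w i := by
  rw [← reflSign_simple_eq_neg_one_iff, ← reflSign_simple_eq_neg_one_iff,
    reflSign_simple_mul cs i' w _ (fun h => hne (mul_inv_eq_iff_eq_mul.mp h).symm)]

theorem length_simple_mul_mul_simple_of_ne {i i' : B} {w : W}
    (hne : cs.simple i' * w ≠ w * cs.simple i)
    (h : cs.length (cs.simple i' * w) = cs.length w + 1) :
    cs.length (cs.simple i' * (w * cs.simple i)) = cs.length (w * cs.simple i) + 1 := by
  have key := isRightDescent_simple_mul_iff_of_ne cs hne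
  simp only [IsRightDescent, mul_assoc] at key
  rcases cs.length_mul_simple w i with h₁ | h₁ <;>
    rcases cs.length_mul_simple (cs.simple i' * w) i with h₂ | h₂ <;>
    simp only [mul_assoc] at h₂ <;> omega

theorem leL_refl (v : W) : leL cs v v :=
  ⟨1, (one_mul v).symm, by simp⟩

theorem leL_trans {x y z : W} (hxy : leL cs x y) (hyz : leL cs y z) : leL cs x z := by
  obtain ⟨u, rfl, hu⟩ := hxy
  obtain ⟨u', rfl, hu'⟩ := hyz
  refine ⟨u' * u, (mul_assoc u' u x).symm, ?_⟩
  have h₁ := cs.length_mul_le u' u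
  have h₂ := cs.length_mul_le (u' * u) x
  rw [mul_assoc] at h₂
  omega

theorem length_simple_mul_of_leL {i : B} {w : W} (h : leL cs w (cs.simple i * w)) :
    cs.length (cs.simple i * w) = cs.length w + 1 := by
  obtain ⟨u, hu, hl⟩ := h
  rw [← mul_right_cancel hu, cs.length_simple] at hl
  omega

theorem leL_simple_mul {i : B} {w : W} (h : cs.length (cs.simple i * w) = cs.length w + 1) :
    leL cs w (cs.simple i * w) :=
  ⟨cs.simple i, rfl, by rw [h, cs.length_simple, add_comm]⟩

theorem reflTransGen_of_leL {v v' : W} (h : leL cs v v') :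
    Relation.ReflTransGen
      (fun x y => ∃ i, y = cs.simple i * x ∧ cs.length y = cs.length x + 1) v v' := by
  obtain ⟨u, rfl, hl⟩ := h
  obtain ⟨ω, hω, rfl⟩ := cs.exists_isReduced u
  rw [hω.eq] at hl
  clear hω
  induction ω with
  | nil => rw [wordProd_nil, one_mul]
  | cons i ω ih =>
    rw [List.length_cons] at hl
    rw [wordProd_cons, mul_assoc] at hl ⊢
    have hshort : cs.length (cs.wordProd ω * v) = ω.length + cs.length v := by
      have := cs.length_mul_le (cs.wordProd ω) v
      have := cs.length_wordProd_le ω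
      rcases cs.length_simple_mul (cs.wordProd ω * v) i with h | h <;> omega
    exact .tail (ih hshort) ⟨i, rfl, by omega⟩

theorem phi_of_iff {i : B} {b : Bool} {w : W} (h : cs.IsRightDescent w i ↔ b) :
    phi cs i b w = w := by
  have := cs.length_mul_simple_ne w i
  cases b <;> simp [phi, IsRightDescent] at h ⊢ <;> omega

theorem phi_of_not_iff {i : B} {b : Bool} {w : W} (h : ¬(cs.IsRightDescent w i ↔ b)) :
    phi cs i b w = w * cs.simple i := by
  have := cs.length_mul_simple_ne w i
  cases b <;> simp [phi, IsRightDescent] at h ⊢ <;> omega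

theorem phi_mul_simple_self (i : B) (b : Bool) (w : W) :
    phi cs i b (w * cs.simple i) = phi cs i b w := by
  have hflip := cs.isRightDescent_iff_not_isRightDescent_mul (w := w) (i := i)
  by_cases h : cs.IsRightDescent w i ↔ b
  · rw [phi_of_iff cs h, phi_of_not_iff cs (by tauto), simple_mul_simple_cancel_right]
  · rw [phi_of_not_iff cs h, phi_of_iff cs (by tauto)]

theorem phi_simple_mul_of_ne {i i' : B} (b : Bool) {w : W}
    (hne : cs.simple i' * w ≠ w * cs.simple i) :
    phi cs i b (cs.simple i' * w) = cs.simple i' * phi cs i b w := by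
  have key := isRightDescent_simple_mul_iff_of_ne cs hne
  by_cases h : cs.IsRightDescent w i ↔ b
  · rw [phi_of_iff cs h, phi_of_iff cs (key.trans h)]
  · rw [phi_of_not_iff cs h, phi_of_not_iff cs (by rwa [key]), mul_assoc]

theorem phi_leL_phi_simple_mul {i i' : B} (b : Bool) {w : W}
    (h : cs.length (cs.simple i' * w) = cs.length w + 1) :
    leL cs (phi cs i b w) (phi cs i b (cs.simple i' * w)) := by
  by_cases hc : cs.simple i' * w = w * cs.simple i
  · rw [hc, phi_mul_simple_self]
    exact leL_refl cs _
  rw [phi_simple_mul_of_ne cs b hc]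
  apply leL_simple_mul
  by_cases hd : cs.IsRightDescent w i ↔ b
  · rwa [phi_of_iff cs hd]
  · rw [phi_of_not_iff cs hd]
    exact length_simple_mul_mul_simple_of_ne cs hc h

theorem phi_monotone (i : B) (b : Bool) {v v' : W} (h : leL cs v v') :
    leL cs (phi cs i b v) (phi cs i b v') := by
  have hchain := reflTransGen_of_leL cs h
  clear h
  induction hchain with
  | refl => exact leL_refl cs _
  | tail _ hstep ih =>
    obtain ⟨i', rfl, hlen⟩ := hstep
    exact leL_trans cs ih (phi_leL_phi_simple_mul cs b hlen)

end CoxeterGroup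

/-- For `w ∈ W`, `s, s' ∈ S` and `b ∈ {0,1}`: if `s'w = ws` then
`φ_{s,b}(s'w) = φ_{s,b}(w)`, and otherwise `φ_{s,b}(s'w) = s'·φ_{s,b}(w)`. Moreover, if
`w ≤_L s'w` then `φ_{s,b}(w) ≤_L φ_{s,b}(s'w)`; consequently `φ_{s,b} : W → W` is
order-preserving for the left weak order. -/
theorem phi_mul_simple_left {B W : Type*} [Group W] {M : CoxeterMatrix B}
    (cs : CoxeterSystem M W) (i i' : B) (b : Bool) (w : W) :
    (cs.simple i' * w = w * cs.simple i →
      phi cs i b (cs.simple i' * w) = phi cs i b w) ∧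
    (cs.simple i' * w ≠ w * cs.simple i →
      phi cs i b (cs.simple i' * w) = cs.simple i' * phi cs i b w) ∧
    (leL cs w (cs.simple i' * w) →
      leL cs (phi cs i b w) (phi cs i b (cs.simple i' * w))) ∧
    (∀ v v' : W, leL cs v v' → leL cs (phi cs i b v) (phi cs i b v')) := by
  refine ⟨fun hc => ?_, phi_simple_mul_of_ne cs b, fun h => ?_, fun v v' => phi_monotone cs i b⟩
  · rw [hc, phi_mul_simple_self]
  · exact phi_leL_phi_simple_mul cs b (length_simple_mul_of_leL cs h)

end Paper
end

section
/- Let J ⊆ S, w̄ ∈ ^JW, σ = (s_1,…,s_n) a word in S, and b ∈ {0,1}^n. Then for every u ∈ W_J one has φ_{σ,b}(u w̄) ∈ W_J · φ_{J,σ,b}(w̄). In particular, if φ_{J,σ,b}(w̄) = w̄, then φ_{σ,b} maps the coset W_J w̄ into itself. -/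
open Polynomial

/-!
For `w ∈ ᴶW` and `u ∈ W_J` one has `ℓ(u w) = ℓ(u) + ℓ(w)`. Hence, if `w s ∈ ᴶW` as well, `s`
changes the length of `u w` in the same direction as that of `w`, so
`φ_{s,b}(u w) = u φ_{J,s,b}(w)`; if `w s ∉ ᴶW`, then `w s = s' w` with `s' ∈ W_J` (Deodhar's
lemma) and `φ_{J,s,b}(w) = w`, so `φ_{s,b}(u w) ∈ {u w, u s' w}` stays in the coset. Induction
along the word gives the theorem.

Both facts rest on the exchange condition, which comes from Tits' representation of `W` on
`W × {±1}`: `s_i` acts by `(t, ε) ↦ (s_i t s_i, ±ε)`, flipping the sign iff `t = s_i`, and then `w`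
flips the sign of `t` once for each occurrence of `w t w⁻¹` in the left inversion sequence of any
word for `w`.
-/

namespace CoxeterSystem

variable {B W : Type*} [Group W] {M : CoxeterMatrix B} (cs : CoxeterSystem M W)

local prefix:100 "s " => cs.simple
local prefix:100 "π " => cs.wordProd
local prefix:100 "ℓ " => cs.length
local prefix:100 "lis " => cs.leftInvSeq

open scoped Classical

noncomputable def signPerm (i : B) : Equiv.Perm (W × ℤˣ) :=
  Function.Involutive.toPerm
    (fun x => (s i * x.1 * s i, if x.1 = s i then -x.2 else x.2)) (by
      rintro ⟨t, ε⟩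
      by_cases h : t = s i <;> simp [h, mul_assoc, mul_eq_one_iff_eq_inv])

theorem signPerm_apply (i : B) (t : W) (ε : ℤˣ) :
    cs.signPerm i (t, ε) = (s i * t * s i, if t = s i then -ε else ε) := rfl

theorem prod_map_signPerm_apply (ω : List B) (t : W) (ε : ℤˣ) :
    (ω.map cs.signPerm).prod (t, ε) =
      (π ω * t * (π ω)⁻¹, ε * (-1) ^ (lis ω).count (π ω * t * (π ω)⁻¹)) := by
  induction ω with
  | nil => simp
  | cons i ω ih =>
    set x := π ω * t * (π ω)⁻¹
    have hx : π (i :: ω) * t * (π (i :: ω))⁻¹ = MulAut.conj (s i) x := by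
      simp [x, wordProd_cons, mul_assoc]
    have hcount : (lis (i :: ω)).count (MulAut.conj (s i) x)
        = (lis ω).count x + if x = s i then 1 else 0 := by
      rw [leftInvSeq, List.count_cons, List.count_map_of_injective _ _ (MulAut.conj _).injective]
      by_cases h : x = s i <;> simp [h, MulAut.conj_apply, mul_assoc, mul_eq_one_iff_eq_inv]
    rw [List.map_cons, List.prod_cons, Equiv.Perm.mul_apply, ih, signPerm_apply, hx, hcount,
      pow_add]
    split_ifs <;> simp [MulAut.conj_apply, x]

theorem prod_map_alternatingWord {G : Type*} [Monoid G] (f : B → G) (i j : B) (p : ℕ) :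
    ((alternatingWord i j (2 * p)).map f).prod = (f i * f j) ^ p := by
  induction p with
  | zero => simp [alternatingWord]
  | succ p ih =>
    rw [Nat.mul_succ, alternatingWord_succ, alternatingWord_succ]
    simp [ih, pow_succ]

theorem leftInvSeq_alternatingWord_two_mul_eq_append (i j : B) :
    lis (alternatingWord i j (2 * M i j)) =
      (List.range (M i j)).map (fun k => s i * (s j * s i) ^ k) ++
        (List.range (M i j)).map (fun k => s i * (s j * s i) ^ k) := by
  have hlis : lis (alternatingWord i j (2 * M i j)) =
      (List.range (2 * M i j)).map (fun k => s i * (s j * s i) ^ k) := by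
    refine List.ext_getElem (by simp) fun k hk _ => ?_
    have hk' : k < 2 * M i j := by simpa using hk
    rw [getElem_leftInvSeq_alternatingWord cs i j _ k hk', prod_alternatingWord_eq_mul_pow]
    simp [Nat.add_div_of_dvd_right]
  rw [hlis, two_mul, List.range_add, List.map_append, List.map_map]
  congr 2
  ext k
  simp [pow_add]

theorem isLiftable_signPerm : M.IsLiftable cs.signPerm := by
  intro i j
  ext1 ⟨t, ε⟩
  rw [← prod_map_alternatingWord, prod_map_signPerm_apply,
    leftInvSeq_alternatingWord_two_mul_eq_append,
    List.count_append, ← two_mul, pow_mul]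
  simp [wordProd, prod_map_alternatingWord]

noncomputable def signRep : W →* Equiv.Perm (W × ℤˣ) :=
  cs.lift ⟨cs.signPerm, cs.isLiftable_signPerm⟩

theorem signRep_simple (i : B) : cs.signRep (s i) = cs.signPerm i :=
  cs.lift_apply_simple cs.isLiftable_signPerm i

theorem signRep_wordProd_apply (ω : List B) (t : W) (ε : ℤˣ) :
    cs.signRep (π ω) (t, ε) =
      (π ω * t * (π ω)⁻¹, ε * (-1) ^ (lis ω).count (π ω * t * (π ω)⁻¹)) := by
  rw [← prod_map_signPerm_apply, wordProd, map_list_prod, List.map_map]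
  simp only [Function.comp_def, signRep_simple]

theorem simple_mem_leftInvSeq_of_isLeftDescent {ω : List B} {i : B}
    (h : cs.IsLeftDescent (π ω) i) : s i ∈ lis ω := by
  -- Otherwise `s i` flips the sign of `(π ω)⁻¹ * s i * π ω` from `1` to `-1`, which puts `s i`
  -- into the left inversion sequence of a reduced word for `s i * π ω`, making `π ω` the shorter.
  by_contra hi
  obtain ⟨ω', hω', hω'eq⟩ := cs.exists_isReduced (s i * π ω)
  have hrep : cs.signRep (π ω') ((π ω)⁻¹ * s i * π ω, 1) =
      cs.signRep (s i) (cs.signRep (π ω) ((π ω)⁻¹ * s i * π ω, 1)) := by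
    rw [← hω'eq, map_mul, Equiv.Perm.mul_apply]
  have hconj : π ω * ((π ω)⁻¹ * s i * π ω) * (π ω)⁻¹ = s i := by group
  have hconj' : π ω' * ((π ω)⁻¹ * s i * π ω) * (π ω')⁻¹ = s i := by
    rw [← hω'eq]; group
  rw [signRep_wordProd_apply, signRep_wordProd_apply, hconj, hconj', signRep_simple,
    signPerm_apply, List.count_eq_zero_of_not_mem hi] at hrep
  have hsign : ((-1) ^ (lis ω').count (s i) : ℤˣ) = -1 := by simpa using congrArg Prod.snd hrep
  have hmem : s i ∈ lis ω' := by
    refine List.count_pos_iff.mp (Nat.pos_of_ne_zero fun h0 => ?_)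
    rw [h0] at hsign
    exact absurd hsign (by decide)
  have := (cs.isLeftInversion_of_mem_leftInvSeq hω' hmem).2
  rw [← hω'eq, simple_mul_simple_cancel_left] at this
  exact lt_asymm h this

theorem exists_eraseIdx_of_isLeftDescent {ω : List B} {i : B} (h : cs.IsLeftDescent (π ω) i) :
    ∃ j < ω.length, s i * π ω = π (ω.eraseIdx j) := by
  obtain ⟨j, hj, hget⟩ := List.mem_iff_getElem.mp (cs.simple_mem_leftInvSeq_of_isLeftDescent h)
  refine ⟨j, by simpa using hj, ?_⟩
  rw [← cs.getD_leftInvSeq_mul_wordProd, List.getD_eq_getElem _ _ hj, hget]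

theorem isLeftDescent_or_length_conj_mul_lt {u w : W} {i : B} (h : cs.IsLeftDescent (u * w) i) :
    cs.IsLeftDescent u i ∨ ℓ (u⁻¹ * s i * u * w) < ℓ w := by
  obtain ⟨α, hα, rfl⟩ := cs.exists_isReduced u
  obtain ⟨β, hβ, rfl⟩ := cs.exists_isReduced w
  rw [← wordProd_append] at h
  obtain ⟨j, hj, heq⟩ := cs.exists_eraseIdx_of_isLeftDescent h
  rcases lt_or_ge j α.length with hjα | hjα
  · left
    rw [List.eraseIdx_append_of_lt_length hjα, wordProd_append, wordProd_append, ← mul_assoc,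
      mul_left_inj] at heq
    have := List.length_eraseIdx_add_one hjα
    have := cs.length_wordProd_le (α.eraseIdx j)
    rw [IsLeftDescent, heq, hα.eq]
    omega
  · right
    rw [List.eraseIdx_append_of_length_le hjα, wordProd_append, wordProd_append] at heq
    have hconj : (π α)⁻¹ * s i * π α * π β = π (β.eraseIdx (j - α.length)) := by
      rw [mul_assoc, mul_assoc, heq, inv_mul_cancel_left]
    have := List.length_eraseIdx_add_one (l := β) (i := j - α.length) (by simp at hj; omega)
    have := cs.length_wordProd_le (β.eraseIdx (j - α.length))
    rw [hconj, hβ.eq]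
    omega

end CoxeterSystem

namespace Paper

variable {B W : Type*} [Group W] {M : CoxeterMatrix B} (cs : CoxeterSystem M W) {J : Set B}

theorem simple_mem_WJ {j : B} (hj : j ∈ J) : cs.simple j ∈ WJ cs J :=
  Subgroup.subset_closure ⟨j, hj, rfl⟩

theorem IsMinRep.length_simple_mul_mul {w : W} (hw : IsMinRep cs J w) {j : B} (hj : j ∈ J)
    {y : W} (hy : y ∈ WJ cs J) (hyw : cs.length (y * w) = cs.length y + cs.length w) :
    cs.length (cs.simple j * y * w) = cs.length (cs.simple j * y) + cs.length w := by
  have hle := cs.length_mul_le (cs.simple j * y) w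
  rw [mul_assoc] at hle ⊢
  rcases cs.length_simple_mul y j with hjy | hjy
  · have hasc : ¬ cs.IsLeftDescent (y * w) j := fun h => by
      rcases cs.isLeftDescent_or_length_conj_mul_lt h with h' | h'
      · exact cs.not_isLeftDescent_iff.mpr hjy h'
      · have hconj : y⁻¹ * cs.simple j * y ∈ WJ cs J :=
          mul_mem (mul_mem (inv_mem hy) (simple_mem_WJ cs hj)) hy
        exact absurd (hw _ hconj) (not_le.mpr h')
    have := cs.not_isLeftDescent_iff.mp hasc
    omega
  · rcases cs.length_simple_mul (y * w) j with h | h <;> omega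

theorem IsMinRep.length_mul {w : W} (hw : IsMinRep cs J w) {u : W} (hu : u ∈ WJ cs J) :
    cs.length (u * w) = cs.length u + cs.length w := by
  induction hu using Subgroup.closure_induction_left with
  | one => simp
  | mul_left x hx y hy ih =>
    obtain ⟨j, hj, rfl⟩ := hx
    exact hw.length_simple_mul_mul cs hj hy ih
  | inv_mul_cancel x hx y hy ih =>
    obtain ⟨j, hj, rfl⟩ := hx
    rw [CoxeterSystem.inv_simple]
    exact hw.length_simple_mul_mul cs hj hy ih

theorem IsMinRep.exists_mul_simple_eq {w : W} (hw : IsMinRep cs J w) {i : B}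
    (h : ¬ IsMinRep cs J (w * cs.simple i)) : ∃ v ∈ WJ cs J, w * cs.simple i = v * w := by
  simp only [IsMinRep, not_forall, not_le] at h
  obtain ⟨u, hu, hlt⟩ := h
  have hne : u ≠ 1 := by rintro rfl; simp at hlt
  have hadd := hw.length_mul cs hu
  rw [← mul_assoc] at hlt
  have hu1 : cs.length u = 1 := by
    have := (cs.length_eq_zero_iff).not.mpr hne
    rcases cs.length_mul_simple w i with h | h <;>
      rcases cs.length_mul_simple (u * w) i with h' | h' <;> omega
  obtain ⟨k, rfl⟩ := cs.length_eq_one_iff.mp hu1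
  have hdesc : cs.IsLeftDescent (w * cs.simple i) k := by
    rwa [CoxeterSystem.IsLeftDescent, ← mul_assoc]
  rcases cs.isLeftDescent_or_length_conj_mul_lt hdesc with h' | h'
  · rw [CoxeterSystem.IsLeftDescent] at h'
    omega
  · rw [cs.length_simple, Nat.lt_one_iff, cs.length_eq_zero_iff] at h'
    refine ⟨(cs.simple k)⁻¹, inv_mem hu, ?_⟩
    calc w * cs.simple i
        = (cs.simple k)⁻¹ * w * (w⁻¹ * cs.simple k * w * cs.simple i) := by group
      _ = (cs.simple k)⁻¹ * w := by rw [h', mul_one]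

theorem phi_eq_or (i : B) (b : Bool) (x : W) :
    phi cs i b x = x ∨ phi cs i b x = x * cs.simple i := by
  unfold phi
  split_ifs <;> simp

theorem phi_mul {u x : W} (i : B) (b : Bool) (hx : cs.length (u * x) = cs.length u + cs.length x)
    (hxs : cs.length (u * (x * cs.simple i)) = cs.length u + cs.length (x * cs.simple i)) :
    phi cs i b (u * x) = u * phi cs i b x := by
  unfold phi
  rw [mul_assoc, hx, hxs]
  split_ifs <;> first | rfl | omega

theorem phiJ_of_isMinRep {w : W} {i : B} (h : IsMinRep cs J (w * cs.simple i)) (b : Bool) :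
    phiJ cs J i b w = phi cs i b w := by
  rw [phiJ, phi, mulJ, if_pos h]

theorem phiJ_of_not_isMinRep {w : W} {i : B} (h : ¬ IsMinRep cs J (w * cs.simple i)) (b : Bool) :
    phiJ cs J i b w = w := by
  rw [phiJ, mulJ, if_neg h]
  split_ifs <;> rfl

theorem isMinRep_phiJ {w : W} (hw : IsMinRep cs J w) (i : B) (b : Bool) :
    IsMinRep cs J (phiJ cs J i b w) := by
  by_cases h : IsMinRep cs J (w * cs.simple i)
  · rw [phiJ_of_isMinRep cs h]
    rcases phi_eq_or cs i b w with h' | h' <;> rw [h'] <;> assumption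
  · rwa [phiJ_of_not_isMinRep cs h]

theorem IsMinRep.exists_phi_mul_eq {w : W} (hw : IsMinRep cs J w) (i : B) (b : Bool) {u : W}
    (hu : u ∈ WJ cs J) : ∃ u' ∈ WJ cs J, phi cs i b (u * w) = u' * phiJ cs J i b w := by
  by_cases h : IsMinRep cs J (w * cs.simple i)
  · rw [phiJ_of_isMinRep cs h]
    exact ⟨u, hu, phi_mul cs i b (hw.length_mul cs hu) (h.length_mul cs hu)⟩
  · rw [phiJ_of_not_isMinRep cs h]
    obtain ⟨v, hv, hvw⟩ := hw.exists_mul_simple_eq cs h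
    rcases phi_eq_or cs i b (u * w) with h' | h'
    · exact ⟨u, hu, h'⟩
    · exact ⟨u * v, mul_mem hu hv, by rw [h', mul_assoc, hvw, mul_assoc]⟩

theorem IsMinRep.exists_foldl_phi_mul_eq {w : W} (hw : IsMinRep cs J w) (l : List (B × Bool))
    {u : W} (hu : u ∈ WJ cs J) : ∃ u' ∈ WJ cs J,
      l.foldl (fun v p => phi cs p.1 p.2 v) (u * w) =
        u' * l.foldl (fun v p => phiJ cs J p.1 p.2 v) w := by
  induction l generalizing w u with
  | nil => exact ⟨u, hu, rfl⟩
  | cons p l ih =>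
    obtain ⟨u', hu', heq⟩ := hw.exists_phi_mul_eq cs p.1 p.2 hu
    simp only [List.foldl_cons, heq]
    exact ih (isMinRep_phiJ cs hw p.1 p.2) hu'

end Paper

namespace Paper

/-- For `J ⊆ S`, `w̄ ∈ ᴶW`, a word `σ` and `b ∈ {0,1}^n`: for every
`u ∈ W_J` one has `φ_{σ,b}(u·w̄) ∈ W_J · φ_{J,σ,b}(w̄)`. In particular, if
`φ_{J,σ,b}(w̄) = w̄` then `φ_{σ,b}` maps the coset `W_J w̄` into itself. -/
theorem phiSeq_coset {B W : Type*} [Group W] {M : CoxeterMatrix B}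
    (cs : CoxeterSystem M W) (J : Set B) {n : ℕ} (σ : Fin n → B) (b : Fin n → Bool)
    (wbar : W) (hbar : IsMinRep cs J wbar) :
    (∀ u ∈ WJ cs J, ∃ u' ∈ WJ cs J,
        phiSeq cs σ b (u * wbar) = u' * phiJSeq cs J σ b wbar) ∧
    (phiJSeq cs J σ b wbar = wbar →
      ∀ u ∈ WJ cs J, ∃ u' ∈ WJ cs J, phiSeq cs σ b (u * wbar) = u' * wbar) := by
  have hcoset : ∀ u ∈ WJ cs J, ∃ u' ∈ WJ cs J,
      phiSeq cs σ b (u * wbar) = u' * phiJSeq cs J σ b wbar :=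
    fun u hu => hbar.exists_foldl_phi_mul_eq cs _ hu
  refine ⟨hcoset, fun hfix => ?_⟩
  rwa [hfix] at hcoset

end Paper
end

section
/- Let w ∈ W, let α ∈ Φ(w), and let β ∈ Φ^+ ∖ Φ(w) be such that α + β ∈ Φ(w). Then w^{-1}(α) ∉ −Δ; equivalently, w^{-1} s_α w is not a simple reflection. -/
/-!
Write `δ := -w⁻¹(α)` and suppose `δ ∈ Δ`. Since `β ∉ Φ(w)`, the root `w⁻¹(β)` is positive, and
since `α + β ∈ Φ(w)`, so is `-w⁻¹(α + β)`. These two nonzero nonnegative combinations of `Δ`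
add up to the simple root `δ`, which is impossible because a simple root is indecomposable: by
linear independence of `Δ`, the coefficient vectors of the two summands add up to that of `δ`,
which has total mass one.
-/

namespace Paper

/-- `v` is a nonnegative integer combination of elements of `D`. -/
def IsNNComb {V : Type*} [AddCommMonoid V] (D : Set V) (v : V) : Prop :=
  ∃ c : V →₀ ℕ, ↑c.support ⊆ D ∧ v = c.sum fun x m => m • x

lemma isNNComb_iff {V : Type*} [AddCommMonoid V] {D : Set V} {v : V} :
    IsNNComb D v ↔ ∃ c ∈ Finsupp.supported ℕ ℕ D, Finsupp.linearCombination ℕ id c = v := by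
  simp only [IsNNComb, Finsupp.mem_supported, Finsupp.linearCombination_apply, id_eq, eq_comm]

lemma IsNNComb.eq_zero_or_eq_zero_of_add_eq {V : Type*} [AddCommMonoid V] {D : Set V}
    (hD : LinearIndepOn ℕ id D) {δ v w : V} (hδ : δ ∈ D)
    (hv : IsNNComb D v) (hw : IsNNComb D w) (h : v + w = δ) : v = 0 ∨ w = 0 := by
  obtain ⟨c, hc, rfl⟩ := isNNComb_iff.1 hv
  obtain ⟨d, hd, rfl⟩ := isNNComb_iff.1 hw
  have hsingle : c + d = Finsupp.single δ 1 := by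
    refine linearIndepOn_iffₛ.1 hD _ (add_mem hc hd) _ (Finsupp.single_mem_supported ℕ 1 hδ) ?_
    rw [map_add, h, Finsupp.linearCombination_single, one_smul, id_eq]
  have hdeg : c.degree + d.degree = 1 := by
    rw [← map_add, hsingle, Finsupp.degree_single]
  rcases Nat.add_eq_one_iff.1 hdeg with ⟨hc0, -⟩ | ⟨-, hd0⟩
  · left; rw [(Finsupp.degree_eq_zero_iff c).1 hc0, map_zero]
  · right; rw [(Finsupp.degree_eq_zero_iff d).1 hd0, map_zero]

/-- The Weyl group element `w` is modelled by any linear automorphism `g` mapping roots to roots,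
`Φ⁺` by the roots in the `ℕ`-span of `Δ`, and `γ ∈ Φ(w)` by `γ ∈ Φ⁺` with `-g⁻¹(γ)` in that span. -/
theorem stmt9_general {V : Type*} [AddCommGroup V] [Module ℝ V]
    (Φ Δ : Finset V)
    (h0 : (0 : V) ∉ Φ)
    (hlin : LinearIndependent ℝ (fun d : Δ => (d : V)))
    (hsplit : ∀ γ ∈ Φ, IsNNComb (↑Δ) γ ∨ IsNNComb (↑Δ) (-γ))
    (g : V ≃ₗ[ℝ] V)
    (hg' : ∀ γ ∈ Φ, g.symm γ ∈ Φ)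
    (α β : V)
    (hβ : β ∈ Φ) (hβw : ¬ IsNNComb (↑Δ) (-(g.symm β)))
    (hαβ : α + β ∈ Φ)
    (hαβw : IsNNComb (↑Δ) (-(g.symm (α + β)))) :
    -(g.symm α) ∉ Δ := by
  intro hδ
  have hβpos : IsNNComb (↑Δ) (g.symm β) := (hsplit _ (hg' β hβ)).resolve_right hβw
  have hsum : g.symm β + -(g.symm (α + β)) = -(g.symm α) := by
    rw [map_add]; abel
  rcases hβpos.eq_zero_or_eq_zero_of_add_eq (hlin.restrict_scalars' ℕ) hδ hαβw hsum with h | h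
  · exact h0 (h ▸ hg' β hβ)
  · rw [neg_eq_zero, LinearEquiv.map_eq_zero_iff] at h
    exact h0 (h ▸ hαβ)

/-- Let `Φ` be a reduced crystallographic root system with base `Δ`,
positive roots `Φ⁺` (the roots that are nonnegative integer combinations of `Δ`), and
let `w` be an element of the Weyl group (an invertible linear map preserving `Φ`).
If `α ∈ Φ(w)`, `β ∈ Φ⁺ ∖ Φ(w)` and `α + β ∈ Φ(w)`, where
`Φ(w) = {γ ∈ Φ⁺ : w⁻¹(γ) ∈ Φ⁻}`, then `w⁻¹(α) ∉ −Δ`; equivalently, `w⁻¹ s_α w` is not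
a simple reflection. -/
theorem stmt9 {V : Type*} [AddCommGroup V] [Module ℝ V]
    (Φ Δ : Finset V)
    (hΔΦ : (↑Δ : Set V) ⊆ ↑Φ)
    (h0 : (0 : V) ∉ Φ)
    (hlin : LinearIndependent ℝ (fun d : Δ => (d : V)))
    (hsplit : ∀ γ ∈ Φ, IsNNComb (↑Δ) γ ∨ IsNNComb (↑Δ) (-γ))
    (g : V ≃ₗ[ℝ] V)
    (hg : ∀ γ ∈ Φ, g γ ∈ Φ) (hg' : ∀ γ ∈ Φ, g.symm γ ∈ Φ)
    (α β : V)
    (hα : α ∈ Φ) (hαpos : IsNNComb (↑Δ) α) (hαw : IsNNComb (↑Δ) (-(g.symm α)))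
    (hβ : β ∈ Φ) (hβpos : IsNNComb (↑Δ) β) (hβw : ¬ IsNNComb (↑Δ) (-(g.symm β)))
    (hαβ : α + β ∈ Φ) (hαβpos : IsNNComb (↑Δ) (α + β))
    (hαβw : IsNNComb (↑Δ) (-(g.symm (α + β)))) :
    -(g.symm α) ∉ Δ :=
  stmt9_general Φ Δ h0 hlin hsplit g hg' α β hβ hβw hαβ hαβw

end Paper
end
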